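/- arXiv:2604.23226 — 4 statements merged into one kernel-verified Lean document; each statement's English description precedes it below -/
import Mathlib

section
/- If a finite simple undirected graph G contains two edge-disjoint spanning trees, then there exists a happy labeling λ of the edges of G such that the temporal graph (G,λ) is temporally connected. -/
/-- An undirected temporal graph: a simple graph together with a finite nonempty
set of positive integer time labels on each edge. -/
structure TemporalGraph (V : Type*) where
  G : SimpleGraph V
  lab : Sym2 V → Finset ℕ
  lab_nonempty : ∀ e ∈ G.edgeSet, (lab e).Nonempty
  lab_pos : ∀ e ∈ G.edgeSet, ∀ t ∈ lab e, 0 < t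

/-- `IsTemporalPath T r verts times` : `verts` is a path in the underlying graph of `T`,
traversed at the times `times` (one label per edge, chosen from the label sets),
with consecutive times related by `r` (`≤` for nonstrict, `<` for strict paths). -/
structure IsTemporalPath {V : Type*} (T : TemporalGraph V) (r : ℕ → ℕ → Prop)
    (verts : List V) (times : List ℕ) : Prop where
  nodup : verts.Nodup
  length_eq : verts.length = times.length + 1
  mono : times.Chain' r
  adj : ∀ i (h : i < times.length),
    T.G.Adj (verts[i]'(by omega)) (verts[i + 1]'(by omega))
  mem_lab : ∀ i (h : i < times.length),
    times[i] ∈ T.lab s(verts[i]'(by omega), verts[i + 1]'(by omega))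

/-- Temporal reachability from `u` to `v` by a temporal path all of whose vertices lie in `S`
(i.e. reachability in the subgraph induced by `S`). -/
def TReachWithin {V : Type*} (T : TemporalGraph V) (r : ℕ → ℕ → Prop) (S : Set V)
    (u v : V) : Prop :=
  ∃ verts times, IsTemporalPath T r verts times ∧
    verts.head? = some u ∧ verts.getLast? = some v ∧ ∀ x ∈ verts, x ∈ S

/-- Temporal reachability in the whole graph. -/
def TReach {V : Type*} (T : TemporalGraph V) (r : ℕ → ℕ → Prop) (u v : V) : Prop :=
  TReachWithin T r Set.univ u v

/-- The subgraph of `T` induced by `S` is temporally connected. -/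
def TemporallyConnectedOn {V : Type*} (T : TemporalGraph V) (r : ℕ → ℕ → Prop)
    (S : Set V) : Prop :=
  ∀ u ∈ S, ∀ v ∈ S, u ≠ v → TReachWithin T r S u v

/-- `T` is temporally connected. -/
def TemporallyConnected {V : Type*} (T : TemporalGraph V) (r : ℕ → ℕ → Prop) : Prop :=
  TemporallyConnectedOn T r Set.univ

/-- `T` is simple: every edge carries exactly one time label. -/
def TemporalGraph.Simple {V : Type*} (T : TemporalGraph V) : Prop :=
  ∀ e ∈ T.G.edgeSet, (T.lab e).card = 1

/-- `T` is happy: simple, and edges sharing a vertex have disjoint label sets. -/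
def TemporalGraph.Happy {V : Type*} (T : TemporalGraph V) : Prop :=
  T.Simple ∧ ∀ e₁ ∈ T.G.edgeSet, ∀ e₂ ∈ T.G.edgeSet, e₁ ≠ e₂ →
    (∃ v, v ∈ e₁ ∧ v ∈ e₂) → Disjoint (T.lab e₁) (T.lab e₂)

/-!
Root both trees at a vertex `r` and let the depth of an edge be the distance to `r` of its
farther endpoint. Label the edges of `T₁` by decreasing depth, then the edges of `T₂`, all later,
by increasing depth. A shortest `T₁`-walk from `u` up to `r` followed by a shortest `T₂`-walk from
`r` down to `v` then has strictly increasing labels; shortcutting it to a path keeps the labels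
sorted. Finally, ties between labels are broken by an enumeration of the edges, which makes the
labeling injective, hence happy, without destroying strict increases.
-/

theorem Nat.mul_add_lt_mul_add_of_lt {a b i j M : ℕ} (hab : a < b) (hi : i < M) :
    a * M + i < b * M + j :=
  calc a * M + i < (a + 1) * M := by rw [add_one_mul]; omega
    _ ≤ b * M := Nat.mul_le_mul_right M hab
    _ ≤ b * M + j := Nat.le_add_right _ _

namespace TemporalGraph

variable {V : Type*}

def ofLabeling (G : SimpleGraph V) (f : Sym2 V → ℕ) (hf : ∀ e, 0 < f e) : TemporalGraph V where
  G := G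
  lab e := {f e}
  lab_nonempty _ _ := Finset.singleton_nonempty _
  lab_pos e _ _ ht := Finset.mem_singleton.mp ht ▸ hf e

variable {G : SimpleGraph V} {f : Sym2 V → ℕ} {hf : ∀ e, 0 < f e}

theorem happy_ofLabeling (hinj : Set.InjOn f G.edgeSet) : (ofLabeling G f hf).Happy :=
  ⟨fun _ _ ↦ Finset.card_singleton _, fun _ he₁ _ he₂ hne _ ↦
    Finset.disjoint_singleton.mpr fun h ↦ hne (hinj he₁ he₂ h)⟩

theorem isTemporalPath_ofLabeling {r : ℕ → ℕ → Prop} {u v : V} {p : G.Walk u v}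
    (hp : p.IsPath) (hmono : (p.edges.map f).IsChain r) :
    IsTemporalPath (ofLabeling G f hf) r p.support (p.edges.map f) where
  nodup := hp.support_nodup
  length_eq := by simp
  mono := hmono
  adj i hi := p.isChain_adj_support.getElem i (by simp_all)
  mem_lab i hi := by
    simp [ofLabeling, SimpleGraph.Walk.getElem_edges_eq_edge_getElem_darts, SimpleGraph.Dart.edge]

theorem tReach_ofLabeling {u v : V} (p : G.Walk u v)
    (hsorted : (p.edges.map f).Pairwise (· ≤ ·)) : TReach (ofLabeling G f hf) (· ≤ ·) u v := by
  classical
  have hsorted' : (p.bypass.edges.map f).Pairwise (· ≤ ·) :=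
    hsorted.sublist (p.edges_bypass_sublist_edges.map f)
  exact ⟨_, _, isTemporalPath_ofLabeling p.bypass_isPath hsorted'.isChain,
    by simp [List.head?_eq_getElem?], by simp [List.getLast?_eq_getElem?], fun _ _ ↦ trivial⟩

end TemporalGraph

theorem exists_happy_temporallyConnected_of_forall_exists_walk {V : Type*} [Fintype V]
    (G : SimpleGraph V) (c : Sym2 V → ℕ)
    (hc : ∀ u v, ∃ p : G.Walk u v, (p.edges.map c).Pairwise (· < ·)) :
    ∃ T : TemporalGraph V, T.G = G ∧ T.Happy ∧ TemporallyConnected T (· ≤ ·) := by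
  classical
  let M := Fintype.card (Sym2 V)
  let idx : Sym2 V → ℕ := fun e ↦ Fintype.equivFin (Sym2 V) e
  have hidx_lt (e : Sym2 V) : idx e < M := (Fintype.equivFin _ e).isLt
  have hidx_inj : Function.Injective idx := Fin.val_injective.comp (Fintype.equivFin _).injective
  let f (e : Sym2 V) : ℕ := c e * M + idx e + 1
  have hf_lt {a b : Sym2 V} (h : c a < c b) : f a < f b :=
    Nat.succ_lt_succ (Nat.mul_add_lt_mul_add_of_lt h (hidx_lt a))
  have hf_inj : Function.Injective f := by
    intro a b h
    rcases lt_trichotomy (c a) (c b) with hab | hab | hab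
    · exact absurd h (hf_lt hab).ne
    · exact hidx_inj (by simpa [f, hab] using h)
    · exact absurd h (hf_lt hab).ne'
  refine ⟨TemporalGraph.ofLabeling G f fun _ ↦ Nat.succ_pos _, rfl,
    TemporalGraph.happy_ofLabeling hf_inj.injOn, fun u _ v _ _ ↦ ?_⟩
  obtain ⟨p, hp⟩ := hc u v
  exact TemporalGraph.tReach_ofLabeling p
    (List.pairwise_map.mpr ((List.pairwise_map.mp hp).imp fun h ↦ (hf_lt h).le))

namespace SimpleGraph

variable {V : Type*} {H : SimpleGraph V}

noncomputable def edgeDepth (H : SimpleGraph V) (r : V) : Sym2 V → ℕ :=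
  Sym2.lift ⟨fun a b ↦ max (H.dist a r) (H.dist b r), fun _ _ ↦ max_comm _ _⟩

theorem Walk.length_eq_dist_of_cons {u w v : V} {h : H.Adj u w} {q : H.Walk w v}
    (hq : (Walk.cons h q).length = H.dist u v) :
    q.length = H.dist w v ∧ H.dist u v = H.dist w v + 1 := by
  obtain ⟨q', hq'⟩ := q.reachable.exists_walk_length_eq_dist
  have h₁ := dist_le q
  have h₂ := dist_le (Walk.cons h q')
  simp only [Walk.length_cons] at hq h₂
  omega

theorem Walk.pairwise_edgeDepth_of_length_eq_dist {u v : V} (p : H.Walk u v)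
    (hp : p.length = H.dist u v) :
    (p.edges.map (H.edgeDepth v)).Pairwise (· > ·) ∧
      ∀ e ∈ p.edges, H.edgeDepth v e ≤ H.dist u v := by
  induction p with
  | nil => simp
  | @cons u w v h q ih =>
    obtain ⟨hq, hdist⟩ := length_eq_dist_of_cons hp
    obtain ⟨ih_pairwise, ih_le⟩ := ih hq
    have hdepth : H.edgeDepth v s(u, w) = H.dist u v := by
      simp [edgeDepth, hdist]
    refine ⟨?_, ?_⟩
    · simp only [edges_cons, List.map_cons, List.pairwise_cons, List.mem_map]
      refine ⟨?_, ih_pairwise⟩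
      rintro _ ⟨e, he, rfl⟩
      have := ih_le e he
      omega
    · simp only [edges_cons, List.mem_cons, forall_eq_or_imp, hdepth, le_refl, true_and]
      exact fun e he ↦ (ih_le e he).trans (by omega)

section TwoTrees

variable [Fintype V] (T₁ T₂ : SimpleGraph V) (r : V)

open Classical in
noncomputable def twoTreeLabel (e : Sym2 V) : ℕ :=
  -- `D` bounds every `T₁`-depth, so `D - T₁.edgeDepth r e` does not truncate
  let D := Finset.univ.sup (T₁.dist · r)
  if e ∈ T₁.edgeSet then D - T₁.edgeDepth r e
  else if e ∈ T₂.edgeSet then D + 1 + T₂.edgeDepth r e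
  else 0

variable {T₁ T₂ r}

theorem pairwise_twoTreeLabel_of_length_eq_dist₁ {u : V} (p : T₁.Walk u r)
    (hp : p.length = T₁.dist u r) :
    (p.edges.map (twoTreeLabel T₁ T₂ r)).Pairwise (· < ·) ∧
      ∀ e ∈ p.edges, twoTreeLabel T₁ T₂ r e ≤ Finset.univ.sup (T₁.dist · r) := by
  obtain ⟨hpairwise, hle⟩ := p.pairwise_edgeDepth_of_length_eq_dist hp
  have hD : T₁.dist u r ≤ Finset.univ.sup (T₁.dist · r) :=
    Finset.le_sup (f := (T₁.dist · r)) (Finset.mem_univ u)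
  have hlabel : ∀ e ∈ p.edges, twoTreeLabel T₁ T₂ r e =
      Finset.univ.sup (T₁.dist · r) - T₁.edgeDepth r e := fun e he ↦ by
    simp [twoTreeLabel, p.edges_subset_edgeSet he]
  refine ⟨List.pairwise_map.mpr (List.pairwise_map.mp hpairwise |>.imp_of_mem ?_), ?_⟩
  · intro a b ha hb hab
    rw [hlabel a ha, hlabel b hb]
    have := hle a ha
    omega
  · intro e he
    rw [hlabel e he]
    exact Nat.sub_le _ _

theorem pairwise_twoTreeLabel_of_length_eq_dist₂ (hdisj : Disjoint T₁.edgeSet T₂.edgeSet)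
    {v : V} (p : T₂.Walk v r) (hp : p.length = T₂.dist v r) :
    (p.reverse.edges.map (twoTreeLabel T₁ T₂ r)).Pairwise (· < ·) ∧
      ∀ e ∈ p.reverse.edges, Finset.univ.sup (T₁.dist · r) < twoTreeLabel T₁ T₂ r e := by
  have hlabel : ∀ e ∈ p.edges, twoTreeLabel T₁ T₂ r e =
      Finset.univ.sup (T₁.dist · r) + 1 + T₂.edgeDepth r e := fun e he ↦ by
    have he₂ : e ∈ T₂.edgeSet := p.edges_subset_edgeSet he
    simp [twoTreeLabel, he₂, Set.disjoint_right.mp hdisj he₂]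
  rw [Walk.edges_reverse, List.map_reverse, List.pairwise_reverse, List.pairwise_map]
  refine ⟨?_, fun e he ↦ by rw [hlabel e (List.mem_reverse.mp he)]; omega⟩
  refine (List.pairwise_map.mp (p.pairwise_edgeDepth_of_length_eq_dist hp).1).imp_of_mem ?_
  intro a b ha hb hab
  rw [hlabel a ha, hlabel b hb]
  omega

theorem exists_walk_pairwise_twoTreeLabel {G : SimpleGraph V} (hle₁ : T₁ ≤ G) (hle₂ : T₂ ≤ G)
    (hconn₁ : T₁.Connected) (hconn₂ : T₂.Connected) (hdisj : Disjoint T₁.edgeSet T₂.edgeSet)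
    (u v : V) : ∃ p : G.Walk u v, (p.edges.map (twoTreeLabel T₁ T₂ r)).Pairwise (· < ·) := by
  obtain ⟨p₁, hp₁⟩ := hconn₁.exists_walk_length_eq_dist u r
  obtain ⟨p₂, hp₂⟩ := hconn₂.exists_walk_length_eq_dist v r
  obtain ⟨hpairwise₁, hle⟩ := pairwise_twoTreeLabel_of_length_eq_dist₁ (T₂ := T₂) p₁ hp₁
  obtain ⟨hpairwise₂, hlt⟩ := pairwise_twoTreeLabel_of_length_eq_dist₂ hdisj p₂ hp₂
  refine ⟨(p₁.mapLe hle₁).append (p₂.mapLe hle₂).reverse, ?_⟩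
  simp only [Walk.edges_append, Walk.reverse_mapLe, Walk.edges_mapLe_eq_edges, List.map_append,
    List.pairwise_append, List.mem_map]
  refine ⟨hpairwise₁, hpairwise₂, ?_⟩
  rintro _ ⟨a, ha, rfl⟩ _ ⟨b, hb, rfl⟩
  exact (hle a ha).trans_lt (hlt b hb)

end TwoTrees

end SimpleGraph

/-- If a finite simple undirected graph `G` contains two edge-disjoint spanning
trees, then there exists a happy labeling of the edges of `G` such that the resulting
temporal graph is temporally connected. -/
theorem exists_happy_tc_labeling_of_two_spanning_trees {V : Type*} [Fintype V]
    (G : SimpleGraph V) (T₁ T₂ : SimpleGraph V)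
    (hle₁ : T₁ ≤ G) (hle₂ : T₂ ≤ G)
    (htree₁ : T₁.IsTree) (htree₂ : T₂.IsTree)
    (hdisj : Disjoint T₁.edgeSet T₂.edgeSet) :
    ∃ T : TemporalGraph V, T.G = G ∧ T.Happy ∧ TemporallyConnected T (· ≤ ·) := by
  obtain ⟨r⟩ := htree₁.connected.nonempty
  exact exists_happy_temporallyConnected_of_forall_exists_walk G
    (SimpleGraph.twoTreeLabel T₁ T₂ r)
    (SimpleGraph.exists_walk_pairwise_twoTreeLabel hle₁ hle₂ htree₁.connected htree₂.connected
      hdisj)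
end

section
/- For every integer g ≥ 4 there exists a finite 4-regular simple undirected graph whose girth is at least g and whose edge set is the union of two edge-disjoint Hamiltonian cycles. -/
/-!
Start from `K₅`, the union of the Hamiltonian cycles `t ↦ t` and `t ↦ 2t` on `ZMod 5`, and double
the girth repeatedly by a cyclic voltage lift. If `G` has girth at least `γ`, give each edge its own
power `M ^ k` of some `M > 2γ`, signed by the direction of traversal, and lift `G` to `V × ZMod N`
for a prime `N ≥ M ^ #edges`. A cycle of length `ℓ < 2γ` in the lift projects to a closed
non-backtracking walk of `G` with total voltage `0`; as `ℓ < M`, reading this total in base `M`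
shows that every edge is traversed equally often in both directions, hence at least twice, while
the walk contains a cycle of `G`, of length at least `γ`. So `ℓ ≥ 2γ`. A Hamiltonian cycle of `G`
has nonzero total voltage, which generates `ZMod N`, so it lifts to a Hamiltonian cycle of the
lift; the lifts of two edge-disjoint Hamiltonian cycles are again edge-disjoint.
-/

open Finset

theorem ZMod.add_one_ne_sub_one {n : ℕ} (hn : 3 ≤ n) (t : ZMod n) : t + 1 ≠ t - 1 := by
  intro h
  have : ((2 : ℕ) : ZMod n) = 0 := by rw [Nat.cast_ofNat]; linear_combination h
  rw [ZMod.natCast_eq_zero_iff] at this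
  exact absurd (Nat.le_of_dvd two_pos this) (by omega)

section SignedDigits

variable {ι : Type*} [DecidableEq ι] {M : ℕ} {k : ι → ℕ} {c : ι → ℤ}

theorem eq_zero_of_sum_mul_pow_eq_zero {s : Finset ι} (hk : Set.InjOn k s)
    (hc : ∀ i ∈ s, |c i| < M) (hsum : ∑ i ∈ s, c i * M ^ k i = 0) : ∀ i ∈ s, c i = 0 := by
  induction s using Finset.induction_on_min_value k with
  | empty => simp
  | insert a s ha hmin ih =>
    have hlt : ∀ x ∈ s, k a < k x := fun x hx ↦ (hmin x hx).lt_of_ne fun h ↦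
      ha (hk (Finset.mem_insert_self a s) (Finset.mem_insert_of_mem hx) h ▸ hx)
    rw [Finset.sum_insert ha] at hsum
    have hdvd : (M : ℤ) ^ k a * M ∣ ∑ x ∈ s, c x * M ^ k x :=
      Finset.dvd_sum fun x hx ↦ (pow_succ (M : ℤ) (k a) ▸ pow_dvd_pow _ (hlt x hx)).mul_left _
    have hM : (M : ℤ) ^ k a ≠ 0 :=
      pow_ne_zero _ ((abs_nonneg _).trans_lt (hc a (Finset.mem_insert_self a s))).ne'
    have hca : c a = 0 := by
      refine Int.eq_zero_of_abs_lt_dvd ?_ (hc a (Finset.mem_insert_self a s))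
      rw [← mul_dvd_mul_iff_left hM, mul_comm _ (c a), eq_neg_of_add_eq_zero_left hsum, dvd_neg]
      exact hdvd
    rw [hca, zero_mul, zero_add] at hsum
    simp only [Finset.forall_mem_insert, hca, true_and]
    exact ih (hk.mono (by simp)) (fun i hi ↦ hc i (by simp [hi])) hsum

theorem abs_sum_mul_pow_lt (hM : 0 < M) {s : Finset ι} (hk : Set.InjOn k s) {K : ℕ}
    (hK : ∀ i ∈ s, k i < K) (hc : ∀ i ∈ s, |c i| < M) : |∑ i ∈ s, c i * M ^ k i| < M ^ K := by
  induction s using Finset.induction_on_max_value k generalizing K with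
  | empty => simpa using pow_pos (Int.natCast_pos.mpr hM) K
  | insert a s ha hmax ih =>
    have hlt : ∀ x ∈ s, k x < k a := fun x hx ↦ (hmax x hx).lt_of_ne fun h ↦
      ha (hk (Finset.mem_insert_of_mem hx) (Finset.mem_insert_self a s) h ▸ hx)
    have hrest := ih (hk.mono (by simp)) hlt (fun i hi ↦ hc i (by simp [hi]))
    have hca : |c a| + 1 ≤ M := hc a (Finset.mem_insert_self a s)
    have hKa : (M : ℤ) ^ (k a + 1) ≤ M ^ K :=
      pow_le_pow_right₀ (by exact_mod_cast hM) (hK a (Finset.mem_insert_self a s))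
    rw [Finset.sum_insert ha]
    calc |c a * M ^ k a + ∑ x ∈ s, c x * M ^ k x|
        ≤ |c a| * M ^ k a + |∑ x ∈ s, c x * M ^ k x| := by
          simpa [abs_mul] using abs_add_le (c a * M ^ k a) _
      _ < (|c a| + 1) * M ^ k a := by linarith
      _ ≤ M * M ^ k a := by gcongr
      _ ≤ M ^ K := by rwa [← pow_succ']

theorem eq_zero_of_dvd_sum_mul_pow (hM : 0 < M) {s : Finset ι} (hk : Set.InjOn k s) {K N : ℕ}
    (hK : ∀ i ∈ s, k i < K) (hc : ∀ i ∈ s, |c i| < M) (hN : M ^ K ≤ N)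
    (hdvd : (N : ℤ) ∣ ∑ i ∈ s, c i * M ^ k i) : ∀ i ∈ s, c i = 0 := by
  refine eq_zero_of_sum_mul_pow_eq_zero hk hc (Int.eq_zero_of_abs_lt_dvd hdvd ?_)
  exact (abs_sum_mul_pow_lt hM hk hK hc).trans_le (by exact_mod_cast hN)

end SignedDigits

namespace SimpleGraph

section CycleSeq

variable {V : Type*} {G : SimpleGraph V}

structure IsCycleSeq (G : SimpleGraph V) (u : ℕ → V) (ℓ : ℕ) : Prop where
  three_le : 3 ≤ ℓ
  adj : ∀ t < ℓ, G.Adj (u t) (u (t + 1))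
  closed : u ℓ = u 0
  injOn : Set.InjOn u (Set.Iio ℓ)

def walkOfSeq (u : ℕ → V) : (ℓ : ℕ) → (∀ t < ℓ, G.Adj (u t) (u (t + 1))) → G.Walk (u 0) (u ℓ)
  | 0, _ => .nil
  | ℓ + 1, hadj => .cons (hadj 0 ℓ.succ_pos)
      (walkOfSeq (fun t ↦ u (t + 1)) ℓ fun t ht ↦ hadj (t + 1) (by omega))

theorem length_walkOfSeq (u : ℕ → V) (ℓ : ℕ) (hadj : ∀ t < ℓ, G.Adj (u t) (u (t + 1))) :
    (walkOfSeq u ℓ hadj).length = ℓ := by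
  induction ℓ generalizing u with
  | zero => rfl
  | succ ℓ ih => simp [walkOfSeq, ih]

theorem getVert_walkOfSeq (u : ℕ → V) (ℓ : ℕ) (hadj : ∀ t < ℓ, G.Adj (u t) (u (t + 1)))
    {i : ℕ} (hi : i ≤ ℓ) : (walkOfSeq u ℓ hadj).getVert i = u i := by
  induction ℓ generalizing u i with
  | zero => simp_all [walkOfSeq]
  | succ ℓ ih =>
    cases i with
    | zero => simp
    | succ i => simp [walkOfSeq, ih _ _ (Nat.le_of_succ_le_succ hi)]

theorem mem_edges_walkOfSeq {u : ℕ → V} {ℓ : ℕ} {hadj : ∀ t < ℓ, G.Adj (u t) (u (t + 1))}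
    {e : Sym2 V} : e ∈ (walkOfSeq u ℓ hadj).edges ↔ ∃ t < ℓ, s(u t, u (t + 1)) = e := by
  induction e with
  | h x y =>
    rw [Walk.mk_mem_edges_iff_exists, length_walkOfSeq]
    refine exists_congr fun t ↦ and_congr_right fun ht ↦ ?_
    rw [getVert_walkOfSeq _ _ _ ht.le, getVert_walkOfSeq _ _ _ ht]

namespace IsCycleSeq

variable {u : ℕ → V} {ℓ : ℕ}

theorem eq_or_of_apply_eq (h : G.IsCycleSeq u ℓ) {a b : ℕ} (ha : a ≤ ℓ) (hb : b ≤ ℓ)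
    (hab : u a = u b) : a = b ∨ a = 0 ∧ b = ℓ ∨ a = ℓ ∧ b = 0 := by
  have hwrap : ∀ {a}, a ≤ ℓ → ∃ a' < ℓ, u a' = u a ∧ (a' = a ∨ a = ℓ ∧ a' = 0) := fun {a} ha ↦ by
    rcases ha.lt_or_eq with ha | rfl
    · exact ⟨a, ha, rfl, .inl rfl⟩
    · exact ⟨0, by have := h.three_le; omega, h.closed.symm, .inr ⟨rfl, rfl⟩⟩
  obtain ⟨a', ha', hua, ha⟩ := hwrap ha
  obtain ⟨b', hb', hub, hb⟩ := hwrap hb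
  have : a' = b' := h.injOn ha' hb' (by rw [hua, hub, hab])
  omega

theorem injOn_edge (h : G.IsCycleSeq u ℓ) :
    Set.InjOn (fun t ↦ s(u t, u (t + 1))) (Set.Iio ℓ) := by
  intro i (hi : i < ℓ) j (hj : j < ℓ) hij
  have := h.three_le
  rcases Sym2.eq_iff.mp hij with ⟨e, -⟩ | ⟨e₁, e₂⟩
  · exact h.injOn hi hj e
  · have := h.eq_or_of_apply_eq hi.le (Nat.succ_le_of_lt hj) e₁
    have := h.eq_or_of_apply_eq (Nat.succ_le_of_lt hi) hj.le e₂
    omega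

def cycle (h : G.IsCycleSeq u ℓ) : G.Walk (u 0) (u 0) :=
  (walkOfSeq u ℓ h.adj).copy rfl h.closed

theorem length_cycle (h : G.IsCycleSeq u ℓ) : h.cycle.length = ℓ := by
  simp [cycle, length_walkOfSeq]

theorem mem_edges_cycle (h : G.IsCycleSeq u ℓ) {e : Sym2 V} :
    e ∈ h.cycle.edges ↔ ∃ t < ℓ, s(u t, u (t + 1)) = e := by
  simp [cycle, mem_edges_walkOfSeq]

theorem isCycle_cycle (h : G.IsCycleSeq u ℓ) : h.cycle.IsCycle := by
  rw [Walk.isCycle_iff_isPath_tail_and_le_length, h.length_cycle,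
    ← Walk.IsPath.getVert_injOn_iff]
  refine ⟨fun i (hi : i ≤ _) j (hj : j ≤ _) hij ↦ ?_, h.three_le⟩
  simp only [Walk.length_tail, h.length_cycle] at hi hj
  simp only [Walk.getVert_tail, cycle, Walk.getVert_copy] at hij
  have := h.three_le
  rw [getVert_walkOfSeq _ _ _ (by omega), getVert_walkOfSeq _ _ _ (by omega)] at hij
  have := h.eq_or_of_apply_eq (by omega) (by omega) hij
  omega

theorem isHamiltonianCycle_cycle [Fintype V] [DecidableEq V] (h : G.IsCycleSeq u ℓ)
    (hcard : Fintype.card V = ℓ) : h.cycle.IsHamiltonianCycle :=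
  Walk.isHamiltonianCycle_iff_isCycle_and_length_eq.mpr
    ⟨h.isCycle_cycle, h.length_cycle.trans hcard.symm⟩

end IsCycleSeq

theorem Walk.IsCycle.isCycleSeq_getVert {v : V} {c : G.Walk v v} (hc : c.IsCycle) :
    G.IsCycleSeq c.getVert c.length where
  three_le := hc.three_le_length
  adj _ ht := c.adj_getVert_succ ht
  closed := by simp
  injOn _ hi _ hj := hc.getVert_injOn' (by simp at hi ⊢; omega) (by simp at hj ⊢; omega)

theorem le_egirth_iff_isCycleSeq {γ : ℕ} :
    (γ : ℕ∞) ≤ G.egirth ↔ ∀ u ℓ, G.IsCycleSeq u ℓ → γ ≤ ℓ := by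
  rw [le_egirth]
  constructor
  · intro hγ u ℓ h
    simpa [h.length_cycle] using hγ _ h.cycle h.isCycle_cycle
  · intro hγ v c hc
    exact_mod_cast hγ _ _ hc.isCycleSeq_getVert

variable {p : ℕ → V} {ℓ : ℕ}

theorem exists_isCycleSeq_of_nonbacktracking (hℓ : 0 < ℓ)
    (hadj : ∀ t < ℓ, G.Adj (p t) (p (t + 1))) (hclosed : p ℓ = p 0)
    (hnb : ∀ t, t + 2 ≤ ℓ → p (t + 2) ≠ p t) :
    ∃ i d, i + d ≤ ℓ ∧ G.IsCycleSeq (fun t ↦ p (i + t)) d := by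
  classical
  -- a closed subwalk of minimal positive length is a cycle
  have hex : ∃ d, 0 < d ∧ ∃ i, i + d ≤ ℓ ∧ p (i + d) = p i :=
    ⟨ℓ, hℓ, 0, by simp, by simpa using hclosed⟩
  obtain ⟨hd, i, hid, hreturn⟩ := Nat.find_spec hex
  have hmin : ∀ a b, a < b → b < Nat.find hex → p (i + a) ≠ p (i + b) := fun a b hab hb he ↦
    (Nat.find_min' hex (m := b - a) ⟨by omega, i + a, by omega, by rw [he]; congr 1; omega⟩).not_gt
      (by omega)
  refine ⟨i, Nat.find hex, hid, ⟨?_, fun t ht ↦ hadj (i + t) (by omega), hreturn, ?_⟩⟩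
  · by_contra! h
    interval_cases hd' : Nat.find hex
    · exact (hadj i (by omega)).ne hreturn.symm
    · exact hnb i hid hreturn
  · intro a (ha : a < _) b (hb : b < _) hab
    by_contra hne
    rcases Nat.lt_or_gt_of_ne hne with h | h
    exacts [hmin a b h hb hab, hmin b a h ha hab.symm]

theorem two_mul_le_of_nonbacktracking [DecidableEq V] {γ : ℕ} (hγ : (γ : ℕ∞) ≤ G.egirth)
    (hℓ : 0 < ℓ) (hadj : ∀ t < ℓ, G.Adj (p t) (p (t + 1))) (hclosed : p ℓ = p 0)
    (hnb : ∀ t, t + 2 ≤ ℓ → p (t + 2) ≠ p t)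
    (htwice : ∀ t < ℓ, 2 ≤ #{j ∈ range ℓ | s(p j, p (j + 1)) = s(p t, p (t + 1))}) :
    2 * γ ≤ ℓ := by
  obtain ⟨i, d, hid, hw⟩ := exists_isCycleSeq_of_nonbacktracking hℓ hadj hclosed hnb
  have hγd : γ ≤ d := le_egirth_iff_isCycleSeq.mp hγ _ _ hw
  set edges := (range ℓ).image fun j ↦ s(p j, p (j + 1))
  have hd : d ≤ #edges := by
    calc d = #((range d).image fun t ↦ s(p (i + t), p (i + (t + 1)))) := by
          rw [card_image_of_injOn (by simpa using hw.injOn_edge), card_range]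
      _ ≤ #edges := card_le_card fun e he ↦ by
          obtain ⟨t, ht, rfl⟩ := mem_image.mp he
          exact mem_image.mpr ⟨i + t, by simp at ht ⊢; omega, by rw [add_assoc]⟩
  have : 2 * #edges ≤ #(range ℓ) := mul_card_image_le_card _ 2 fun e he ↦ by
    obtain ⟨t, ht, rfl⟩ := mem_image.mp he
    exact htwice t (mem_range.mp ht)
  rw [card_range] at this
  omega

end CycleSeq

section CyclicEnumeration

variable {V : Type*} {n : ℕ}

def cycleEdges (σ : ZMod n → V) : Set (Sym2 V) := Set.range fun t ↦ s(σ t, σ (t + 1))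

def twoCycleGraph (σ₁ σ₂ : ZMod n → V) : SimpleGraph V :=
  fromEdgeSet (cycleEdges σ₁ ∪ cycleEdges σ₂)

variable {σ σ₁ σ₂ : ZMod n → V}

theorem mk_mem_cycleEdges_iff (hσ : σ.Injective) {t : ZMod n} {w : V} :
    s(σ t, w) ∈ cycleEdges σ ↔ w = σ (t + 1) ∨ w = σ (t - 1) := by
  constructor
  · rintro ⟨t', ht'⟩
    rcases Sym2.eq_iff.mp ht' with ⟨h₁, rfl⟩ | ⟨rfl, h₂⟩
    · exact .inl (by rw [hσ h₁])
    · exact .inr (by rw [← hσ h₂, add_sub_cancel_right])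
  · rintro (rfl | rfl)
    · exact ⟨t, rfl⟩
    · exact ⟨t - 1, by simp [Sym2.eq_swap]⟩

theorem not_isDiag_of_mem_cycleEdges (hn : 1 < n) (hσ : σ.Injective) {e : Sym2 V}
    (he : e ∈ cycleEdges σ) : ¬e.IsDiag := by
  obtain ⟨t, rfl⟩ := he
  have : Fact (1 < n) := ⟨hn⟩
  rw [Sym2.mk_isDiag_iff, hσ.eq_iff, left_eq_add]
  exact one_ne_zero

theorem isCycleSeq_of_injective {G : SimpleGraph V} (hn : 3 ≤ n) (hσ : σ.Injective)
    (hG : cycleEdges σ ⊆ G.edgeSet) : G.IsCycleSeq (fun t : ℕ ↦ σ t) n where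
  three_le := hn
  adj t _ := by simpa using hG ⟨t, rfl⟩
  closed := by simp
  injOn i (hi : i < n) j (hj : j < n) hij := by
    simpa [ZMod.natCast_eq_natCast_iff', Nat.mod_eq_of_lt, hi, hj] using hσ hij

theorem exists_isHamiltonianCycle_of_bijective [Fintype V] [DecidableEq V] {G : SimpleGraph V}
    (hn : 3 ≤ n) (hσ : σ.Bijective) (hG : cycleEdges σ ⊆ G.edgeSet) (v : V) :
    ∃ c : G.Walk v v, c.IsHamiltonianCycle ∧ ∀ e, e ∈ c.edges ↔ e ∈ cycleEdges σ := by
  have : NeZero n := ⟨by omega⟩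
  have h := isCycleSeq_of_injective hn hσ.injective hG
  have hc := h.isHamiltonianCycle_cycle (by rw [← Fintype.card_of_bijective hσ, ZMod.card])
  refine ⟨_, hc.rotate (hc.mem_support v), fun e ↦ ?_⟩
  rw [(h.cycle.rotate_edges v _).mem_iff, h.mem_edges_cycle]
  constructor
  · rintro ⟨t, -, rfl⟩
    exact ⟨t, by simp⟩
  · rintro ⟨t, rfl⟩
    exact ⟨t.val, t.val_lt, by simp⟩

theorem injective_cycleEdge (hn : 3 ≤ n) {σ : ZMod n → V} (hσ : σ.Injective) :
    (fun t ↦ s(σ t, σ (t + 1))).Injective := by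
  intro a b hab
  rcases Sym2.eq_iff.mp hab with ⟨h, -⟩ | ⟨h₁, h₂⟩
  · exact hσ h
  · refine absurd ?_ (ZMod.add_one_ne_sub_one hn b)
    rw [← hσ h₁, ← hσ h₂, add_sub_cancel_right]

theorem edgeSet_twoCycleGraph (hn : 1 < n) (h₁ : σ₁.Injective) (h₂ : σ₂.Injective) :
    (twoCycleGraph σ₁ σ₂).edgeSet = cycleEdges σ₁ ∪ cycleEdges σ₂ := by
  rw [twoCycleGraph, edgeSet_fromEdgeSet, sdiff_eq_left, Set.disjoint_left]
  rintro e (he | he)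
  exacts [not_isDiag_of_mem_cycleEdges hn h₁ he, not_isDiag_of_mem_cycleEdges hn h₂ he]

theorem ncard_neighborSet_twoCycleGraph (hn : 3 ≤ n) (h₁ : σ₁.Bijective) (h₂ : σ₂.Bijective)
    (hdisj : Disjoint (cycleEdges σ₁) (cycleEdges σ₂)) (v : V) :
    ((twoCycleGraph σ₁ σ₂).neighborSet v).ncard = 4 := by
  obtain ⟨t₁, rfl⟩ := h₁.surjective v
  obtain ⟨t₂, ht₂⟩ := h₂.surjective (σ₁ t₁)
  have hnbr : (twoCycleGraph σ₁ σ₂).neighborSet (σ₁ t₁) =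
      {σ₁ (t₁ + 1), σ₁ (t₁ - 1)} ∪ {σ₂ (t₂ + 1), σ₂ (t₂ - 1)} := by
    ext w
    rw [mem_neighborSet, ← mem_edgeSet, edgeSet_twoCycleGraph (by omega) h₁.injective h₂.injective,
      Set.mem_union, mk_mem_cycleEdges_iff h₁.injective, ← ht₂, mk_mem_cycleEdges_iff h₂.injective]
    simp only [Set.mem_union, Set.mem_insert_iff, Set.mem_singleton_iff]
  have hdisj' : Disjoint ({σ₁ (t₁ + 1), σ₁ (t₁ - 1)} : Set V) {σ₂ (t₂ + 1), σ₂ (t₂ - 1)} := by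
    refine Set.disjoint_left.mpr fun w hw₁ hw₂ ↦ hdisj.ne_of_mem (b := s(σ₁ t₁, w)) ?_ ?_ rfl
    · exact (mk_mem_cycleEdges_iff h₁.injective).mpr hw₁
    · rw [← ht₂]; exact (mk_mem_cycleEdges_iff h₂.injective).mpr hw₂
  have hpair {σ : ZMod n → V} (hσ : σ.Injective) (t : ZMod n) :
      ({σ (t + 1), σ (t - 1)} : Set V).ncard = 2 := by
    rw [Set.ncard_pair (hσ.ne (ZMod.add_one_ne_sub_one hn t))]
  rw [hnbr, Set.ncard_union_eq hdisj', hpair h₁.injective, hpair h₂.injective]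

theorem map_mem_cycleEdges_comp {W : Type*} (f : V → W) {e : Sym2 V} (he : e ∈ cycleEdges σ) :
    e.map f ∈ cycleEdges (f ∘ σ) := by
  obtain ⟨t, rfl⟩ := he
  exact ⟨t, rfl⟩

theorem disjoint_cycleEdges_of_comp {W : Type*} (f : V → W)
    (h : Disjoint (cycleEdges (f ∘ σ₁)) (cycleEdges (f ∘ σ₂))) :
    Disjoint (cycleEdges σ₁) (cycleEdges σ₂) :=
  Set.disjoint_left.mpr fun _ he₁ he₂ ↦
    Set.disjoint_left.mp h (map_mem_cycleEdges_comp f he₁) (map_mem_cycleEdges_comp f he₂)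

theorem twoCycleGraph_isContained {W : Type*} {H : SimpleGraph W} (f : V ↪ W)
    (h₁ : cycleEdges (f ∘ σ₁) ⊆ H.edgeSet) (h₂ : cycleEdges (f ∘ σ₂) ⊆ H.edgeSet) :
    twoCycleGraph σ₁ σ₂ ⊑ H := by
  refine ⟨⟨⟨f, fun {x y} hxy ↦ ?_⟩, f.injective⟩⟩
  rw [twoCycleGraph, fromEdgeSet_adj] at hxy
  rcases hxy.1 with he | he
  exacts [h₁ (map_mem_cycleEdges_comp f he), h₂ (map_mem_cycleEdges_comp f he)]

end CyclicEnumeration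

section VoltageLift

variable {V A : Type*} {G : SimpleGraph V}

def voltageLift [AddCommGroup A] (G : SimpleGraph V) (α : V → V → A) : SimpleGraph (V × A) :=
  fromRel fun p q ↦ G.Adj p.1 q.1 ∧ q.2 = p.2 + α p.1 q.1

theorem voltageLift_adj [AddCommGroup A] {α : V → V → A} (hα : ∀ x y, x ≠ y → α y x = -α x y)
    {p q : V × A} : (voltageLift G α).Adj p q ↔ G.Adj p.1 q.1 ∧ q.2 = p.2 + α p.1 q.1 := by
  rw [voltageLift, fromRel_adj]
  constructor
  · rintro ⟨-, h | ⟨hadj, heq⟩⟩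
    · exact h
    · refine ⟨hadj.symm, ?_⟩
      rw [heq, hα _ _ hadj.ne]
      abel
  · intro h
    exact ⟨fun hpq ↦ h.1.ne (congrArg Prod.fst hpq), .inl h⟩

theorem IsCycleSeq.sum_voltage_fst_eq_zero [AddCommGroup A] {α : V → V → A}
    (hα : ∀ x y, x ≠ y → α y x = -α x y) {w : ℕ → V × A} {ℓ : ℕ}
    (hw : (voltageLift G α).IsCycleSeq w ℓ) :
    ∑ t ∈ range ℓ, α (w t).1 (w (t + 1)).1 = 0 := by
  have hstep : ∀ t ∈ range ℓ, α (w t).1 (w (t + 1)).1 = (w (t + 1)).2 - (w t).2 := fun t ht ↦ by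
    rw [((voltageLift_adj hα).mp (hw.adj t (mem_range.mp ht))).2]
    abel
  rw [sum_congr rfl hstep, sum_range_sub (fun t ↦ (w t).2), hw.closed, sub_self]

theorem IsCycleSeq.fst_ne_of_add_two [AddCommGroup A] {α : V → V → A}
    (hα : ∀ x y, x ≠ y → α y x = -α x y) {w : ℕ → V × A} {ℓ : ℕ}
    (hw : (voltageLift G α).IsCycleSeq w ℓ) {t : ℕ} (ht : t + 2 ≤ ℓ) :
    (w (t + 2)).1 ≠ (w t).1 := by
  intro he
  have h₁ := (voltageLift_adj hα).mp (hw.adj t (by omega))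
  have h₂ := (voltageLift_adj hα).mp (hw.adj (t + 1) (by omega))
  have hsnd : (w (t + 2)).2 = (w t).2 := by
    rw [h₂.2, h₁.2, he, hα _ _ h₁.1.ne, add_neg_cancel_right]
  have := hw.eq_or_of_apply_eq ht (by omega) (Prod.ext he hsnd)
  have := hw.three_le
  omega

end VoltageLift

section EdgeVoltage

variable {V : Type*} [LinearOrder V] {G : SimpleGraph V} {K M N : ℕ}

def orientation (x y : V) : ℤ := if x < y then 1 else -1

theorem orientation_ne_zero (x y : V) : orientation x y ≠ 0 := by
  unfold orientation; split_ifs <;> norm_num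

theorem abs_orientation (x y : V) : |orientation x y| = 1 := by
  unfold orientation; split_ifs <;> norm_num

theorem orientation_swap {x y : V} (h : x ≠ y) : orientation y x = -orientation x y := by
  unfold orientation
  rcases h.lt_or_gt with h | h
  · simp [h, h.not_gt]
  · simp [h, h.not_gt]

-- One base-`M` digit per edge: the total voltage of a walk records, edge by edge, how often the
-- edge is traversed in each direction.
def edgeVoltage (code : Sym2 V → Fin K) (M : ℕ) (x y : V) : ℤ :=
  orientation x y * M ^ (code s(x, y) : ℕ)

theorem edgeVoltage_swap (code : Sym2 V → Fin K) {x y : V} (h : x ≠ y) :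
    edgeVoltage code M y x = -edgeVoltage code M x y := by
  rw [edgeVoltage, edgeVoltage, orientation_swap h, Sym2.eq_swap, neg_mul]

theorem intCast_edgeVoltage_swap (code : Sym2 V → Fin K) {x y : V} (h : x ≠ y) :
    (edgeVoltage code M y x : ZMod N) = -edgeVoltage code M x y := by
  rw [edgeVoltage_swap code h, Int.cast_neg]

def signedCount (p : ℕ → V) (ℓ : ℕ) (e : Sym2 V) : ℤ :=
  ∑ j ∈ range ℓ with s(p j, p (j + 1)) = e, orientation (p j) (p (j + 1))

theorem sum_edgeVoltage_eq_sum_signedCount (code : Sym2 V → Fin K) (p : ℕ → V) (ℓ : ℕ) :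
    ∑ j ∈ range ℓ, edgeVoltage code M (p j) (p (j + 1)) =
      ∑ e ∈ (range ℓ).image (fun j ↦ s(p j, p (j + 1))),
        signedCount p ℓ e * M ^ (code e : ℕ) := by
  rw [← sum_fiberwise_of_maps_to (fun j hj ↦ mem_image_of_mem (fun j ↦ s(p j, p (j + 1))) hj)]
  refine sum_congr rfl fun e _ ↦ ?_
  rw [signedCount, sum_mul]
  refine sum_congr rfl fun j hj ↦ ?_
  rw [edgeVoltage, (mem_filter.mp hj).2]

theorem signedCount_eq_zero (code : Sym2 V → Fin K) (hcode : code.Injective) {p : ℕ → V}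
    {ℓ : ℕ} (hℓM : ℓ < M) (hN : M ^ K ≤ N)
    (hsum : ∑ j ∈ range ℓ, (edgeVoltage code M (p j) (p (j + 1)) : ZMod N) = 0) :
    ∀ t < ℓ, signedCount p ℓ s(p t, p (t + 1)) = 0 := by
  have hdvd : (N : ℤ) ∣ ∑ j ∈ range ℓ, edgeVoltage code M (p j) (p (j + 1)) := by
    rw [← ZMod.intCast_zmod_eq_zero_iff_dvd]
    push_cast
    exact hsum
  rw [sum_edgeVoltage_eq_sum_signedCount] at hdvd
  have hbound : ∀ e, |signedCount p ℓ e| < M := fun e ↦ by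
    calc |signedCount p ℓ e| ≤ ∑ j ∈ range ℓ with s(p j, p (j + 1)) = e, 1 := by
          refine (abs_sum_le_sum_abs _ _).trans (sum_le_sum fun j _ ↦ ?_)
          rw [abs_orientation]
      _ ≤ ∑ j ∈ range ℓ, (1 : ℤ) := sum_le_sum_of_subset_of_nonneg (filter_subset _ _)
          (fun _ _ _ ↦ zero_le_one)
      _ < M := by simpa using hℓM
  have := eq_zero_of_dvd_sum_mul_pow (by omega) (fun e _ e' _ h ↦ hcode (Fin.ext h))
    (fun e _ ↦ (code e).isLt) (fun e _ ↦ hbound e) hN hdvd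
  exact fun t ht ↦ this _ (mem_image_of_mem _ (mem_range.mpr ht))

theorem two_le_card_fiber_of_signedCount_eq_zero {p : ℕ → V} {ℓ t : ℕ} (ht : t < ℓ)
    (h : signedCount p ℓ s(p t, p (t + 1)) = 0) :
    2 ≤ #{j ∈ range ℓ | s(p j, p (j + 1)) = s(p t, p (t + 1))} := by
  by_contra! hlt
  have hmem : t ∈ {j ∈ range ℓ | s(p j, p (j + 1)) = s(p t, p (t + 1))} := by simp [ht]
  obtain ⟨a, ha⟩ := card_eq_one.mp (le_antisymm (Nat.le_of_lt_succ hlt) (card_pos.mpr ⟨t, hmem⟩))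
  rw [signedCount, ha, sum_singleton] at h
  exact orientation_ne_zero _ _ h

theorem le_egirth_voltageLift (code : Sym2 V → Fin K) (hcode : code.Injective) {γ : ℕ}
    (hγ : (γ : ℕ∞) ≤ G.egirth) (hM : 2 * γ ≤ M) (hN : M ^ K ≤ N) :
    ((2 * γ : ℕ) : ℕ∞) ≤ (voltageLift G fun x y ↦ (edgeVoltage code M x y : ZMod N)).egirth := by
  have hα (x y : V) (h : x ≠ y) := intCast_edgeVoltage_swap (M := M) (N := N) code h
  refine le_egirth_iff_isCycleSeq.mpr fun w ℓ hw ↦ ?_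
  by_contra! hℓ
  set p := fun t ↦ (w t).1
  have hadj : ∀ t < ℓ, G.Adj (p t) (p (t + 1)) := fun t ht ↦
    ((voltageLift_adj hα).mp (hw.adj t ht)).1
  have hzero := signedCount_eq_zero code hcode (by omega) hN (hw.sum_voltage_fst_eq_zero hα)
  exact hℓ.not_ge (two_mul_le_of_nonbacktracking hγ (by have := hw.three_le; omega)
    hadj (congrArg Prod.fst hw.closed) (fun t ht ↦ hw.fst_ne_of_add_two hα ht)
    fun t ht ↦ two_le_card_fiber_of_signedCount_eq_zero ht (hzero t ht))

end EdgeVoltage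

section LiftedEnumeration

variable {V : Type*} {n N : ℕ}

def voltageSum (σ : ZMod n → V) (α : V → V → ZMod N) (k : ℕ) : ZMod N :=
  ∑ i ∈ range k, α (σ i) (σ (i + 1))

def liftSeq (σ : ZMod n → V) (α : V → V → ZMod N) (k : ℕ) : V × ZMod N :=
  (σ k, voltageSum σ α k)

-- Runs `N` times around `σ`, recording the accumulated voltage.
def liftEnum (σ : ZMod n → V) (α : V → V → ZMod N) (t : ZMod (n * N)) : V × ZMod N :=
  liftSeq σ α t.val

variable {σ : ZMod n → V} {α : V → V → ZMod N}

theorem voltageSum_succ (k : ℕ) :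
    voltageSum σ α (k + 1) = voltageSum σ α k + α (σ k) (σ (k + 1)) :=
  sum_range_succ _ _

theorem voltageSum_add (k : ℕ) : voltageSum σ α (k + n) = voltageSum σ α k + voltageSum σ α n := by
  induction k with
  | zero => simp [voltageSum]
  | succ k ih =>
    rw [add_right_comm, voltageSum_succ, ih, voltageSum_succ]
    push_cast
    rw [ZMod.natCast_self, add_zero]
    abel

theorem voltageSum_add_mul (k q : ℕ) :
    voltageSum σ α (k + q * n) = voltageSum σ α k + q * voltageSum σ α n := by
  induction q with
  | zero => simp
  | succ q ih =>
    rw [add_mul, one_mul, ← add_assoc, voltageSum_add, ih]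
    push_cast
    ring

theorem periodic_liftSeq : Function.Periodic (liftSeq σ α) (n * N) := fun k ↦ by
  rw [liftSeq, liftSeq, mul_comm, voltageSum_add_mul]
  simp

theorem liftEnum_add_one [NeZero (n * N)] (t : ZMod (n * N)) :
    liftEnum σ α (t + 1) = liftSeq σ α (t.val + 1) := by
  rw [liftEnum, ← periodic_liftSeq.map_mod_nat (t.val + 1), ← ZMod.val_natCast]
  simp

theorem cycleEdges_liftEnum_subset [NeZero (n * N)] {G : SimpleGraph V}
    (hα : ∀ x y, x ≠ y → α y x = -α x y) (hG : cycleEdges σ ⊆ G.edgeSet) :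
    cycleEdges (liftEnum σ α) ⊆ (voltageLift G α).edgeSet := by
  rintro _ ⟨t, rfl⟩
  rw [mem_edgeSet, liftEnum_add_one, voltageLift_adj hα]
  refine ⟨by simpa [liftEnum, liftSeq] using hG ⟨t.val, rfl⟩, ?_⟩
  simp [liftEnum, liftSeq, voltageSum_succ]

theorem cycleEdges_fst_liftEnum_subset [NeZero (n * N)] :
    cycleEdges (Prod.fst ∘ liftEnum σ α) ⊆ cycleEdges σ := by
  rintro _ ⟨t, rfl⟩
  exact ⟨t.val, by simp only [Function.comp_apply, liftEnum_add_one]; simp [liftEnum, liftSeq]⟩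

theorem injective_liftEnum [NeZero (n * N)] (hσ : σ.Injective) (hN : N.Prime)
    (hτ : voltageSum σ α n ≠ 0) : (liftEnum σ α).Injective := by
  have : Fact N.Prime := ⟨hN⟩
  intro a b hab
  have hmod : a.val % n = b.val % n :=
    (ZMod.natCast_eq_natCast_iff' _ _ _).mp (hσ (congrArg Prod.fst hab))
  have hdiv : a.val / n = b.val / n := by
    have hsum := congrArg Prod.snd hab
    simp only [liftEnum, liftSeq] at hsum
    rw [← Nat.mod_add_div' a.val n, ← Nat.mod_add_div' b.val n, voltageSum_add_mul,
      voltageSum_add_mul, hmod, add_right_inj] at hsum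
    have hlt (c : ZMod (n * N)) : c.val / n < N := Nat.div_lt_of_lt_mul c.val_lt
    simpa [ZMod.natCast_eq_natCast_iff', Nat.mod_eq_of_lt, hlt] using mul_right_cancel₀ hτ hsum
  exact ZMod.val_injective _ (by rw [← Nat.mod_add_div' a.val n, hmod, hdiv, Nat.mod_add_div'])

theorem voltageSum_edgeVoltage_ne_zero [LinearOrder V] {K M : ℕ} (code : Sym2 V → Fin K)
    (hcode : code.Injective) (hn : 3 ≤ n) (hσ : σ.Injective) (hM : 1 < M) (hN : M ^ K ≤ N) :
    voltageSum σ (fun x y ↦ (edgeVoltage code M x y : ZMod N)) n ≠ 0 := by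
  intro h
  have hdvd : (N : ℤ) ∣ ∑ i ∈ range n, orientation (σ i) (σ (i + 1)) *
      M ^ (code s(σ i, σ (i + 1)) : ℕ) := by
    rw [← ZMod.intCast_zmod_eq_zero_iff_dvd]
    push_cast [voltageSum, edgeVoltage] at h ⊢
    exact h
  have hinj : Set.InjOn (fun i : ℕ ↦ (code s(σ i, σ (i + 1)) : ℕ)) (range n) :=
    fun i hi j hj hij ↦ by
      have := injective_cycleEdge hn hσ (hcode (Fin.ext hij))
      simpa [ZMod.natCast_eq_natCast_iff', Nat.mod_eq_of_lt, mem_range.mp hi, mem_range.mp hj]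
        using this
  have := eq_zero_of_dvd_sum_mul_pow (by omega) hinj (fun i _ ↦ (code _).isLt)
    (fun i _ ↦ by rw [abs_orientation]; exact_mod_cast hM) hN hdvd 0 (by simp; omega)
  exact orientation_ne_zero _ _ this

end LiftedEnumeration

def ExistsTwoHamiltonianCyclesOfGirth (γ : ℕ) : Prop :=
  ∃ (n : ℕ) (σ₁ σ₂ : ZMod n → Fin n), 3 ≤ n ∧ σ₁.Bijective ∧ σ₂.Bijective ∧
    Disjoint (cycleEdges σ₁) (cycleEdges σ₂) ∧ (γ : ℕ∞) ≤ (twoCycleGraph σ₁ σ₂).egirth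

theorem existsTwoHamiltonianCyclesOfGirth_three : ExistsTwoHamiltonianCyclesOfGirth 3 := by
  -- `K₅` as the union of the pentagon and the pentagram
  refine ⟨5, id, (2 * · : ZMod 5 → ZMod 5), by norm_num, Function.bijective_id,
    (by decide : Function.Bijective (2 * · : ZMod 5 → ZMod 5)), ?_, three_le_egirth⟩
  refine Set.disjoint_left.mpr ?_
  rintro _ ⟨a, rfl⟩ ⟨b, hb⟩
  revert a b
  decide

theorem ExistsTwoHamiltonianCyclesOfGirth.two_mul {γ : ℕ}
    (h : ExistsTwoHamiltonianCyclesOfGirth γ) : ExistsTwoHamiltonianCyclesOfGirth (2 * γ) := by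
  obtain ⟨n, σ₁, σ₂, hn, h₁, h₂, hdisj, hγ⟩ := h
  -- `M > 2γ` exceeds every edge multiplicity in a closed walk of length `< 2γ`, and `M > 1`
  set M := 2 * γ + 2
  set code := Fintype.equivFin (Sym2 (Fin n))
  obtain ⟨N, hMN, hN⟩ := Nat.exists_infinite_primes (M ^ Fintype.card (Sym2 (Fin n)))
  set α := fun x y ↦ (edgeVoltage code M x y : ZMod N)
  have hα (x y : Fin n) (h : x ≠ y) : α y x = -α x y := intCast_edgeVoltage_swap code h
  have : NeZero n := ⟨by omega⟩
  have : NeZero N := ⟨hN.ne_zero⟩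
  have hcard : Fintype.card (Fin n × ZMod N) = n * N := by simp
  have hbij {σ : ZMod n → Fin n} (hσ : σ.Bijective) : (liftEnum σ α).Bijective := by
    refine (Fintype.bijective_iff_injective_and_card _).mpr ⟨injective_liftEnum hσ.injective hN
      (voltageSum_edgeVoltage_ne_zero code code.injective hn hσ.injective (by omega) hMN), ?_⟩
    rw [ZMod.card, hcard]
  set e := Fintype.equivFinOfCardEq hcard
  have hcomp (σ : ZMod n → Fin n) : e.symm ∘ e ∘ liftEnum σ α = liftEnum σ α := by
    ext1 t; simp
  have hedges {σ : ZMod n → Fin n} (hσ : cycleEdges σ ⊆ cycleEdges σ₁ ∪ cycleEdges σ₂) :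
      cycleEdges (e.symm ∘ e ∘ liftEnum σ α) ⊆ (voltageLift (twoCycleGraph σ₁ σ₂) α).edgeSet := by
    rw [hcomp]
    refine cycleEdges_liftEnum_subset hα (hσ.trans ?_)
    rw [edgeSet_twoCycleGraph (by omega) h₁.injective h₂.injective]
  refine ⟨n * N, e ∘ liftEnum σ₁ α, e ∘ liftEnum σ₂ α, hn.trans (Nat.le_mul_of_pos_right n hN.pos),
    e.bijective.comp (hbij h₁), e.bijective.comp (hbij h₂), ?_, ?_⟩
  · refine disjoint_cycleEdges_of_comp (Prod.fst ∘ e.symm) ?_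
    rw [Function.comp_assoc, hcomp, Function.comp_assoc, hcomp]
    exact hdisj.mono cycleEdges_fst_liftEnum_subset cycleEdges_fst_liftEnum_subset
  · refine (le_egirth_voltageLift code code.injective hγ (by omega) hMN).trans ?_
    refine IsContained.egirth_le (twoCycleGraph_isContained e.symm.toEmbedding ?_ ?_)
    · exact hedges Set.subset_union_left
    · exact hedges Set.subset_union_right

theorem existsTwoHamiltonianCyclesOfGirth (γ : ℕ) : ExistsTwoHamiltonianCyclesOfGirth γ := by
  have hpow (k : ℕ) : ExistsTwoHamiltonianCyclesOfGirth (3 * 2 ^ k) := by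
    induction k with
    | zero => exact existsTwoHamiltonianCyclesOfGirth_three
    | succ k ih => rw [pow_succ, mul_comm _ 2, ← mul_assoc, mul_comm 3, mul_assoc]; exact ih.two_mul
  obtain ⟨n, σ₁, σ₂, hn, h₁, h₂, hdisj, hgirth⟩ := hpow γ
  refine ⟨n, σ₁, σ₂, hn, h₁, h₂, hdisj, le_trans ?_ hgirth⟩
  exact_mod_cast γ.lt_two_pow_self.le.trans (by omega)

end SimpleGraph

open SimpleGraph in
theorem exists_four_regular_high_girth_two_hamiltonian_cycles_general (g : ℕ) :
    ∃ (n : ℕ) (G : SimpleGraph (Fin n)) (v : Fin n) (c₁ c₂ : G.Walk v v),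
      c₁.IsHamiltonianCycle ∧ c₂.IsHamiltonianCycle ∧
      (∀ e ∈ c₁.edges, e ∉ c₂.edges) ∧
      (∀ e, e ∈ G.edgeSet ↔ e ∈ c₁.edges ∨ e ∈ c₂.edges) ∧
      (∀ w : Fin n, (G.neighborSet w).ncard = 4) ∧
      (g : ℕ∞) ≤ G.egirth := by
  obtain ⟨n, σ₁, σ₂, hn, h₁, h₂, hdisj, hgirth⟩ := existsTwoHamiltonianCyclesOfGirth g
  have hE := edgeSet_twoCycleGraph (by omega) h₁.injective h₂.injective
  obtain ⟨c₁, hc₁, he₁⟩ :=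
    exists_isHamiltonianCycle_of_bijective hn h₁ (hE ▸ Set.subset_union_left) (σ₁ 0)
  obtain ⟨c₂, hc₂, he₂⟩ :=
    exists_isHamiltonianCycle_of_bijective hn h₂ (hE ▸ Set.subset_union_right) (σ₁ 0)
  refine ⟨n, twoCycleGraph σ₁ σ₂, σ₁ 0, c₁, c₂, hc₁, hc₂, fun e he he' ↦ ?_, fun e ↦ ?_,
    ncard_neighborSet_twoCycleGraph hn h₁ h₂ hdisj, hgirth⟩
  · exact Set.disjoint_left.mp hdisj ((he₁ e).mp he) ((he₂ e).mp he')
  · rw [hE, he₁, he₂, Set.mem_union]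

/-- For every integer `g ≥ 4` there exists a finite 4-regular simple undirected
graph whose girth is at least `g` and whose edge set is the union of two edge-disjoint
Hamiltonian cycles. -/
theorem exists_four_regular_high_girth_two_hamiltonian_cycles (g : ℕ) (hg : 4 ≤ g) :
    ∃ (n : ℕ) (G : SimpleGraph (Fin n)) (v : Fin n) (c₁ c₂ : G.Walk v v),
      c₁.IsHamiltonianCycle ∧ c₂.IsHamiltonianCycle ∧
      (∀ e ∈ c₁.edges, e ∉ c₂.edges) ∧
      (∀ e, e ∈ G.edgeSet ↔ e ∈ c₁.edges ∨ e ∈ c₂.edges) ∧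
      (∀ w : Fin n, (G.neighborSet w).ncard = 4) ∧
      (g : ℕ∞) ≤ G.egirth :=
  exists_four_regular_high_girth_two_hamiltonian_cycles_general g
end

section
/- In any connector path, for every s ∈ {17,18,19,20} and every t ∈ {1,2,5,7} there is no temporal path from s to t. -/
/-- The vertex sequence of the red path of a connector path: `1, 2, …, 20`. -/
def redList : List ℕ := (List.range 20).map (· + 1)

/-- The vertex sequence of the blue path of a connector path. -/
def blueList : List ℕ := [1, 5, 9, 13, 2, 7, 11, 19, 14, 6, 17, 10, 3, 15, 8, 18, 4, 12, 16, 20]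

/-- `T` is a connector path: a happy temporal graph on vertex set `{1,…,20}` (as a subset of
`ℕ`) whose edge set is the disjoint union of the red path and the blue path, where along each
path the labels increase consecutively (by exactly one from one edge to the next), and every
label of a blue edge is strictly larger than every label of a red edge. -/
def IsConnectorPath (T : TemporalGraph ℕ) : Prop :=
  T.Happy ∧
  ∃ r0 b0 : ℕ, 0 < r0 ∧ r0 + 19 ≤ b0 ∧
    (∀ u v : ℕ, T.G.Adj u v ↔
      ((∃ i < 19, s(u, v) = s(redList.getD i 0, redList.getD (i + 1) 0)) ∨
       (∃ j < 19, s(u, v) = s(blueList.getD j 0, blueList.getD (j + 1) 0)))) ∧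
    (∀ i < 19, T.lab s(redList.getD i 0, redList.getD (i + 1) 0) = {r0 + i}) ∧
    (∀ j < 19, T.lab s(blueList.getD j 0, blueList.getD (j + 1) 0) = {b0 + j})

/-! Every blue label exceeds every red one, so a time-respecting walk takes red edges first and
blue edges afterwards. Along each colour the labels grow by one per edge, so a walker can step
back along that colour at most once before the label it would need has passed. Hence a walk from
`17, …, 20` stays at `16, …, 20` while it uses red edges (entering `16` only from `17`), and
afterwards stays off the first six vertices `1, 5, 9, 13, 2, 7` of the blue path (entering `11`,
the seventh, only from `19`). -/

theorem TReachWithin.exists_of_invariant {V : Type*} {T : TemporalGraph V} {S : Set V}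
    {u v : V} (h : TReachWithin T (· ≤ ·) S u v) (I : V → ℕ → Prop) (hu : I u 0)
    (hstep : ∀ x τ y ℓ, I x τ → T.G.Adj x y → ℓ ∈ T.lab s(x, y) → τ ≤ ℓ → I y ℓ) :
    ∃ τ, I v τ := by
  obtain ⟨verts, times, hp, hhead, hlast, -⟩ := h
  have hlen := hp.length_eq
  have key : ∀ i (hi : i ≤ times.length), ∃ τ, I (verts[i]'(by omega)) τ ∧
      ∀ h : i < times.length, τ ≤ times[i] := by
    intro i hi
    induction i with
    | zero =>
      refine ⟨0, ?_, fun _ => Nat.zero_le _⟩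
      rw [List.head?_eq_getElem?, List.getElem?_eq_getElem (by omega), Option.some_inj]
        at hhead
      rwa [hhead]
    | succ i ih =>
      obtain ⟨τ, hτ, hle⟩ := ih (by omega)
      refine ⟨times[i], hstep _ _ _ _ hτ (hp.adj i (by omega)) (hp.mem_lab i (by omega))
        (hle (by omega)), fun h => ?_⟩
      exact List.isChain_iff_getElem.mp hp.mono i h
  obtain ⟨τ, hτ, -⟩ := key times.length le_rfl
  refine ⟨τ, ?_⟩
  rw [List.getLast?_eq_getElem?, List.getElem?_eq_getElem (by omega), Option.some_inj] at hlast
  simp only [← hlast, hlen, Nat.add_sub_cancel, hτ]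

/-- `τ` is the label of the last edge taken, `0` before the first step. -/
def IsLateState (r0 b0 v τ : ℕ) : Prop :=
  (τ < b0 → 16 ≤ v ∧ (v = 16 → r0 + 15 ≤ τ)) ∧
    (b0 ≤ τ → v ∉ blueList.take 6 ∧ (v = 11 → b0 + 6 ≤ τ))

lemma redList_getD {i : ℕ} (hi : i < 20) : redList.getD i 0 = i + 1 := by
  simp [redList, List.getD_eq_getElem?_getD, hi]

lemma exists_red_or_blue_of_adj {T : TemporalGraph ℕ} {r0 b0 : ℕ}
    (hadj : ∀ u v : ℕ, T.G.Adj u v ↔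
      ((∃ i < 19, s(u, v) = s(redList.getD i 0, redList.getD (i + 1) 0)) ∨
       (∃ j < 19, s(u, v) = s(blueList.getD j 0, blueList.getD (j + 1) 0))))
    (hred : ∀ i < 19, T.lab s(redList.getD i 0, redList.getD (i + 1) 0) = {r0 + i})
    (hblue : ∀ j < 19, T.lab s(blueList.getD j 0, blueList.getD (j + 1) 0) = {b0 + j})
    {v w ℓ : ℕ} (h : T.G.Adj v w) (hℓ : ℓ ∈ T.lab s(v, w)) :
    (∃ i < 19, s(v, w) = s(i + 1, i + 2) ∧ ℓ = r0 + i) ∨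
      ∃ j < 19, s(v, w) = s(blueList.getD j 0, blueList.getD (j + 1) 0) ∧ ℓ = b0 + j := by
  rcases (hadj v w).mp h with ⟨i, hi, he⟩ | ⟨j, hj, he⟩
  · rw [he, hred i hi, Finset.mem_singleton] at hℓ
    rw [redList_getD (by omega), redList_getD (by omega)] at he
    exact Or.inl ⟨i, hi, he, hℓ⟩
  · rw [he, hblue j hj, Finset.mem_singleton] at hℓ
    exact Or.inr ⟨j, hj, he, hℓ⟩

lemma isLateState_red_step {r0 b0 i v w τ : ℕ} (hb : r0 + 19 ≤ b0) (hi : i < 19)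
    (he : s(v, w) = s(i + 1, i + 2)) (hτ : τ ≤ r0 + i) (h : IsLateState r0 b0 v τ) :
    IsLateState r0 b0 w (r0 + i) := by
  obtain ⟨hv, -⟩ := h
  refine ⟨fun _ => ?_, fun _ => by omega⟩
  rcases Sym2.eq_iff.mp he with ⟨rfl, rfl⟩ | ⟨rfl, rfl⟩ <;> omega

lemma blueList_late_step : ∀ j < 19,
    ∀ v ∈ [blueList.getD j 0, blueList.getD (j + 1) 0],
    ∀ w ∈ [blueList.getD j 0, blueList.getD (j + 1) 0], v ≠ w →
      (16 ≤ v ∨ v ∉ blueList.take 6 ∧ (v = 11 → 6 ≤ j)) →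
      w ∉ blueList.take 6 ∧ (w = 11 → 6 ≤ j) := by
  decide

lemma isLateState_blue_step {r0 b0 j v w τ : ℕ} (hj : j < 19)
    (he : s(v, w) = s(blueList.getD j 0, blueList.getD (j + 1) 0)) (hvw : v ≠ w)
    (hτ : τ ≤ b0 + j) (h : IsLateState r0 b0 v τ) :
    IsLateState r0 b0 w (b0 + j) := by
  obtain ⟨hv, hw⟩ : v ∈ [blueList.getD j 0, blueList.getD (j + 1) 0] ∧
      w ∈ [blueList.getD j 0, blueList.getD (j + 1) 0] := by
    rcases Sym2.eq_iff.mp he with ⟨rfl, rfl⟩ | ⟨rfl, rfl⟩ <;> simp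
  have hlate : 16 ≤ v ∨ v ∉ blueList.take 6 ∧ (v = 11 → 6 ≤ j) := by
    by_cases hτb : τ < b0
    · exact Or.inl (h.1 hτb).1
    · obtain ⟨hv6, hv11⟩ := h.2 (by omega)
      exact Or.inr ⟨hv6, fun h11 => by have := hv11 h11; omega⟩
  obtain ⟨hw6, hw11⟩ := blueList_late_step j hj v hv w hw hvw hlate
  exact ⟨fun _ => by omega, fun _ => ⟨hw6, fun h11 => by have := hw11 h11; omega⟩⟩

/-- In any connector path, for every `s ∈ {17,18,19,20}` and every
`t ∈ {1,2,5,7}` there is no temporal path from `s` to `t`. -/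
theorem connectorPath_no_path_late_to_early (T : TemporalGraph ℕ)
    (hT : IsConnectorPath T) (s t : ℕ)
    (hs : s ∈ ({17, 18, 19, 20} : Set ℕ)) (ht : t ∈ ({1, 2, 5, 7} : Set ℕ)) :
    ¬ TReach T (· ≤ ·) s t := by
  obtain ⟨-, r0, b0, -, hb, hadj, hred, hblue⟩ := hT
  intro hreach
  have hs0 : IsLateState r0 b0 s 0 := by
    simp only [Set.mem_insert_iff, Set.mem_singleton_iff] at hs
    exact ⟨fun _ => by omega, fun _ => by omega⟩
  obtain ⟨τ, hτ⟩ := hreach.exists_of_invariant (IsLateState r0 b0) hs0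
    fun v τ w ℓ h hvw hℓ hτℓ => by
      rcases exists_red_or_blue_of_adj hadj hred hblue hvw hℓ with
        ⟨i, hi, he, rfl⟩ | ⟨j, hj, he, rfl⟩
      · exact isLateState_red_step hb hi he hτℓ h
      · exact isLateState_blue_step hj he hvw.ne hτℓ h
  simp only [Set.mem_insert_iff, Set.mem_singleton_iff] at ht
  by_cases hτb : τ < b0
  · have := (hτ.1 hτb).1
    omega
  · have hearly := (hτ.2 (by omega)).1
    rcases ht with rfl | rfl | rfl | rfl <;> simp [blueList] at hearly
end

section
/- Let 𝒢 be a simple undirected temporal graph with strict reachability, and let S be an inclusion-minimal vertex set with |S| ≥ 3 such that the induced temporal subgraph 𝒢[S] is temporally connected (i.e., no proper subset S' ⊆ S with |S'| ≥ 3 induces a temporally connected subgraph). Then the induced underlying graph G[S] is 2-vertex-connected. -/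
/-!
Let `v` be a vertex of `S` and suppose `G[S] - v` splits into a union of components `C` and
the rest `D`. A temporal path inside `S` between two vertices of `C ∪ {v}` cannot leave
`C ∪ {v}`: it could only do so through `v`, and it would have to come back through `v` as well.
Hence `C ∪ {v}` and `D ∪ {v}` are both temporally connected, so by minimality
`C = {a}`, `D = {b}` and `S = {a, v, b}` with `a`, `b` non-adjacent. The only temporal paths
`a → b` and `b → a` are then `a v b` and `b v a`, which need `λ(av) < λ(vb)` and
`λ(vb) < λ(av)` for the single labels of the two edges.
-/

section

open Set SimpleGraph

variable {V : Type*}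

namespace SimpleGraph

/-- `C` is a union of connected components of `G[U]`. -/
def IsClosedOn (G : SimpleGraph V) (U C : Set V) : Prop :=
  C ⊆ U ∧ ∀ x ∈ C, ∀ y ∈ U, G.Adj x y → y ∈ C

theorem IsClosedOn.diff {G : SimpleGraph V} {U C : Set V} (h : G.IsClosedOn U C) :
    G.IsClosedOn U (U \ C) :=
  ⟨sdiff_subset, fun x hx y hy hxy => ⟨hy, fun hyC => hx.2 (h.2 y hyC x hx.1 hxy.symm)⟩⟩

theorem reachable_induce_of_isChain {G : SimpleGraph V} {S : Set V} {l : List V}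
    (hl : l.IsChain G.Adj) (hS : ∀ x ∈ l, x ∈ S) {u v : S} (hu : l.head? = some (u : V))
    (hv : l.getLast? = some (v : V)) : (G.induce S).Reachable u v := by
  have hne : l ≠ [] := by rintro rfl; simp at hu
  have hl' : l.IsChain fun x y => G.Adj x y ∧ y ∈ S :=
    hl.imp_of_mem_imp fun _ y _ hy hxy => ⟨hxy, hS y hy⟩
  obtain ⟨hlast, hr⟩ := hl'.induction (fun y => ∃ hy : y ∈ S, (G.induce S).Reachable u ⟨y, hy⟩) l
    (@fun _ _ ⟨hxy, hy⟩ ⟨_, hr⟩ => ⟨hy, hr.trans (Adj.reachable (G := G.induce S) hxy)⟩)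
    (fun lne => by rw [(List.head_eq_iff_head?_eq_some lne).2 hu]; exact ⟨u.2, .rfl⟩)
    (l.getLast hne) (l.getLast_mem hne)
  rwa [show (⟨l.getLast hne, hlast⟩ : S) = v from
    Subtype.ext ((List.getLast_eq_iff_getLast?_eq_some hne).2 hv)] at hr

/-- In `G[S] - v`, the vertices reachable from `a` form a union of components of `G[S \ {v}]`. -/
theorem exists_isClosedOn_of_not_reachable (G : SimpleGraph V) {S : Set V} {v : S}
    {a b : {u : S | u ≠ v}} (h : ¬ ((G.induce S).induce {u | u ≠ v}).Reachable a b) :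
    ∃ C, G.IsClosedOn (S \ {(v : V)}) C ∧ ((a : S) : V) ∈ C ∧ ((b : S) : V) ∉ C := by
  refine ⟨{x | ∃ (hx : x ∈ S) (hxv : ⟨x, hx⟩ ≠ v),
    ((G.induce S).induce {u | u ≠ v}).Reachable a ⟨⟨x, hx⟩, hxv⟩}, ⟨?_, ?_⟩, ⟨_, a.2, .rfl⟩, ?_⟩
  · rintro x ⟨hx, hxv, -⟩
    exact ⟨hx, fun h => hxv (Subtype.ext h)⟩
  · rintro x ⟨hx, hxv, hr⟩ y ⟨hy, hyv⟩ hxy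
    have hyv' : (⟨y, hy⟩ : S) ≠ v := fun h => hyv (congrArg Subtype.val h)
    exact ⟨hy, hyv', hr.trans (Adj.reachable (G := (G.induce S).induce {u | u ≠ v}) hxy)⟩
  · rintro ⟨_, _, hr⟩
    exact h hr

end SimpleGraph

namespace List

theorem forall_mem_of_isChain_of_isClosedOn {G : SimpleGraph V} {U C : Set V} {l : List V}
    (hC : G.IsClosedOn U C) (hl : l.IsChain G.Adj) (hU : ∀ x ∈ l, x ∈ U)
    (hhead : ∀ x ∈ l.head?, x ∈ C) : ∀ x ∈ l, x ∈ C :=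
  (hl.imp_of_mem_imp (S := fun x y => G.Adj x y ∧ y ∈ U) fun _ y _ hy hxy => ⟨hxy, hU y hy⟩
    ).induction (· ∈ C) l (@fun x y ⟨hxy, hy⟩ hx => hC.2 x hx y hy hxy)
    (fun lne => hhead _ (head?_eq_some_head lne))

theorem forall_mem_insert_of_isClosedOn {G : SimpleGraph V} {S C : Set V} {w : V}
    {l : List V} (hl : l.IsChain G.Adj) (hnodup : l.Nodup) (hS : ∀ x ∈ l, x ∈ S)
    (hC : G.IsClosedOn (S \ {w}) C) (hhead : ∀ x ∈ l.head?, x ∈ insert w C)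
    (hlast : ∀ x ∈ l.getLast?, x ∈ insert w C) : ∀ x ∈ l, x ∈ insert w C := by
  have key : ∀ l' : List V, l'.IsChain G.Adj → (∀ x ∈ l', x ∈ S) → w ∉ l' →
      (∀ x ∈ l'.head?, x ∈ insert w C) → ∀ x ∈ l', x ∈ insert w C := by
    intro l' hl' hS' hw' hhead' x hx
    refine Or.inr (forall_mem_of_isChain_of_isClosedOn hC hl'
      (fun y hy => ⟨hS' y hy, fun h => hw' (h ▸ hy)⟩) (fun y hy => ?_) x hx)
    exact (hhead' y hy).resolve_left fun h => hw' (h ▸ mem_of_mem_head? hy)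
  -- `w` occurs at most once: the piece before it is followed forwards from the head,
  -- the piece after it backwards from the last vertex.
  by_cases hw : w ∈ l
  · obtain ⟨l₁, l₂, rfl⟩ := append_of_mem hw
    have hw₁ : w ∉ l₁ := fun h => (nodup_append.1 hnodup).2.2 w h w mem_cons_self rfl
    have hw₂ : w ∉ l₂ := (nodup_cons.1 (nodup_append.1 hnodup).2.1).1
    have h₁ := key l₁ hl.left_of_append (fun x hx => hS x (mem_append_left _ hx)) hw₁
      (fun x hx => hhead x (by simp [head?_append, Option.mem_def.1 hx]))
    have h₂ := key l₂.reverse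
      (isChain_reverse.2 (hl.right_of_append.tail.imp fun _ _ h => h.symm))
      (fun x hx => hS x (by simp_all)) (by simpa using hw₂)
      (fun x hx => hlast x (by simp_all [getLast?_append, getLast?_cons]))
    intro x hx
    rcases mem_append.1 hx with hx | hx
    · exact h₁ x hx
    rcases mem_cons.1 hx with rfl | hx
    · exact mem_insert x C
    · exact h₂ x (mem_reverse.2 hx)
  · exact key l hl hS hw hhead

end List

theorem List.eq_triple_of_isChain {α : Type*} {R : α → α → Prop} {l : List α} {x y z : α}
    (hl : l.IsChain R) (hnodup : l.Nodup) (hsub : ∀ u ∈ l, u ∈ ({x, y, z} : Set α))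
    (hx : l.head? = some x) (hz : l.getLast? = some z) (hxz : x ≠ z) (hR : ¬ R x z) :
    l = [x, y, z] := by
  classical
  have hlen : l.length ≤ 3 :=
    calc l.length = l.toFinset.card := (toFinset_card_of_nodup hnodup).symm
      _ ≤ ({x, y, z} : Finset α).card := Finset.card_le_card fun u hu => by
        simpa using hsub u (mem_toFinset.1 hu)
      _ ≤ 3 := Finset.card_le_three
  rcases l with _ | ⟨a, _ | ⟨b, _ | ⟨c, _ | ⟨d, l⟩⟩⟩⟩ <;> simp_all
  · exact hsub.resolve_left (Ne.symm hnodup.1)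
  · omega

namespace IsTemporalPath

variable {T : TemporalGraph V} {r : ℕ → ℕ → Prop} {verts : List V} {times : List ℕ}

theorem isChain_adj (hp : IsTemporalPath T r verts times) : verts.IsChain T.G.Adj :=
  List.isChain_iff_getElem.2 fun i hi => hp.adj i (by have := hp.length_eq; omega)

end IsTemporalPath

variable {T : TemporalGraph V} {r : ℕ → ℕ → Prop} {S C : Set V} {w x y z : V}

theorem TemporalGraph.Simple.lab_eq (hT : T.Simple) (hxy : T.G.Adj x y) {t t' : ℕ}
    (ht : t ∈ T.lab s(x, y)) (ht' : t' ∈ T.lab s(x, y)) : t = t' :=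
  Finset.card_le_one.1 (hT _ hxy).le t ht t' ht'

theorem TReachWithin.exists_lab_of_subset_triple (h : TReachWithin T r S x z)
    (hS : S ⊆ {x, y, z}) (hxz : x ≠ z) (hadj : ¬ T.G.Adj x z) :
    T.G.Adj x y ∧ T.G.Adj y z ∧ ∃ t₁ ∈ T.lab s(x, y), ∃ t₂ ∈ T.lab s(y, z), r t₁ t₂ := by
  obtain ⟨verts, times, hp, hx, hz, hmem⟩ := h
  obtain rfl := List.eq_triple_of_isChain hp.isChain_adj hp.nodup (fun u hu => hS (hmem u hu))
    hx hz hxz hadj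
  obtain ⟨t₁, t₂, rfl⟩ : ∃ t₁ t₂, times = [t₁, t₂] := by
    match times, hp.length_eq with
    | [t₁, t₂], _ => exact ⟨t₁, t₂, rfl⟩
  exact ⟨hp.adj 0 (by simp), hp.adj 1 (by simp), t₁, hp.mem_lab 0 (by simp), t₂,
    hp.mem_lab 1 (by simp), (List.isChain_cons_cons.1 hp.mono).1⟩

theorem TemporalGraph.Simple.not_temporallyConnectedOn_of_subset_triple (hT : T.Simple)
    (hS : S ⊆ {x, y, z}) (hx : x ∈ S) (hz : z ∈ S) (hxz : x ≠ z) (hadj : ¬ T.G.Adj x z) :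
    ¬ TemporallyConnectedOn T (· < ·) S := by
  intro htc
  obtain ⟨hxy, hyz, t₁, ht₁, t₂, ht₂, h₁₂⟩ :=
    (htc x hx z hz hxz).exists_lab_of_subset_triple hS hxz hadj
  have hS' : S ⊆ {z, y, x} := by rwa [insert_comm, pair_comm, insert_comm]
  obtain ⟨-, -, u₁, hu₁, u₂, hu₂, hu₁₂⟩ :=
    (htc z hz x hx hxz.symm).exists_lab_of_subset_triple hS' hxz.symm (fun h => hadj h.symm)
  rw [Sym2.eq_swap] at hu₁ hu₂
  have := hT.lab_eq hxy ht₁ hu₂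
  have := hT.lab_eq hyz ht₂ hu₁
  omega

theorem TemporallyConnectedOn.preconnected_induce (htc : TemporallyConnectedOn T r S) :
    (T.G.induce S).Preconnected := by
  intro u v
  by_cases huv : u = v
  · exact huv ▸ .rfl
  obtain ⟨verts, times, hp, hu, hv, hS⟩ := htc u u.2 v v.2 (Subtype.coe_ne_coe.2 huv)
  exact SimpleGraph.reachable_induce_of_isChain hp.isChain_adj hS hu hv

theorem TReachWithin.insert_of_isClosedOn (h : TReachWithin T r S x y)
    (hC : T.G.IsClosedOn (S \ {w}) C) (hx : x ∈ insert w C) (hy : y ∈ insert w C) :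
    TReachWithin T r (insert w C) x y := by
  obtain ⟨verts, times, hp, hhead, hlast, hS⟩ := h
  exact ⟨verts, times, hp, hhead, hlast, List.forall_mem_insert_of_isClosedOn hp.isChain_adj
    hp.nodup hS hC (by simpa [hhead]) (by simpa [hlast])⟩

theorem TemporallyConnectedOn.insert_of_isClosedOn (htc : TemporallyConnectedOn T r S)
    (hw : w ∈ S) (hC : T.G.IsClosedOn (S \ {w}) C) : TemporallyConnectedOn T r (insert w C) :=
  have hsub : insert w C ⊆ S := insert_subset hw (hC.1.trans sdiff_subset)
  fun _ hx _ hy hxy => (htc _ (hsub hx) _ (hsub hy) hxy).insert_of_isClosedOn hC hx hy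

theorem ncard_le_one_of_isClosedOn_of_minimal (htc : TemporallyConnectedOn T r S)
    (hmin : ∀ S' : Set V, S' ⊆ S → S' ≠ S → 3 ≤ S'.ncard → ¬ TemporallyConnectedOn T r S')
    (hw : w ∈ S) (hC : T.G.IsClosedOn (S \ {w}) C) (hx : x ∈ S \ {w}) (hxC : x ∉ C) :
    C.ncard ≤ 1 := by
  by_contra! hC₂
  have hwC : w ∉ C := fun h => (hC.1 h).2 rfl
  refine hmin (insert w C) (insert_subset hw (hC.1.trans sdiff_subset)) ?_ ?_
    (htc.insert_of_isClosedOn hw hC)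
  · rintro hCS
    rcases hCS ▸ hx.1 with h | h
    exacts [hx.2 h, hxC h]
  · rw [ncard_insert_of_notMem hwC (finite_of_ncard_pos (by omega))]
    omega

theorem not_isClosedOn_of_minimal (hT : T.Simple) (hS : S.Finite)
    (htc : TemporallyConnectedOn T (· < ·) S)
    (hmin : ∀ S' : Set V, S' ⊆ S → S' ≠ S → 3 ≤ S'.ncard →
      ¬ TemporallyConnectedOn T (· < ·) S')
    (hw : w ∈ S) (hx : x ∈ C) (hy : y ∈ S \ {w}) (hyC : y ∉ C) :
    ¬ T.G.IsClosedOn (S \ {w}) C := by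
  intro hC
  have hfin : (S \ {w}).Finite := hS.subset sdiff_subset
  have hCx : ∀ u ∈ C, u = x := fun u hu => (ncard_le_one (hfin.subset hC.1)).1
    (ncard_le_one_of_isClosedOn_of_minimal htc hmin hw hC hy hyC) u hu x hx
  have hDy : ∀ u ∈ (S \ {w}) \ C, u = y := fun u hu => (ncard_le_one (hfin.subset sdiff_subset)).1
    (ncard_le_one_of_isClosedOn_of_minimal htc hmin hw hC.diff (hC.1 hx) (fun h => h.2 hx))
    u hu y ⟨hy, hyC⟩
  have hSsub : S ⊆ {x, w, y} := by
    intro u hu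
    by_cases huw : u = w
    · simp [huw]
    by_cases huC : u ∈ C
    · simp [hCx u huC]
    · simp [hDy u ⟨⟨hu, huw⟩, huC⟩]
  exact hT.not_temporallyConnectedOn_of_subset_triple hSsub (hC.1 hx).1 hy.1
    (ne_of_mem_of_not_mem hx hyC) (fun h => hyC (hC.2 x hx y hy h)) htc

end

theorem minimal_closed_tcc_twoConnected_general {V : Type*}
    (T : TemporalGraph V) (hsimple : T.Simple)
    (S : Set V) (h3 : 3 ≤ S.ncard)
    (htc : TemporallyConnectedOn T (· < ·) S)
    (hmin : ∀ S' : Set V, S' ⊆ S → S' ≠ S → 3 ≤ S'.ncard →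
      ¬ TemporallyConnectedOn T (· < ·) S') :
    (T.G.induce S).Connected ∧ 3 ≤ S.ncard ∧
      ∀ v : S, ((T.G.induce S).induce {u : S | u ≠ v}).Connected := by
  have hS : S.Finite := Set.finite_of_ncard_pos (by omega)
  obtain ⟨u, hu⟩ := Set.nonempty_of_ncard_ne_zero (s := S) (by omega)
  refine ⟨(SimpleGraph.connected_iff _).2 ⟨htc.preconnected_induce, ⟨⟨u, hu⟩⟩⟩, h3,
    fun v => (SimpleGraph.connected_iff _).2 ⟨fun a b => ?_, ?_⟩⟩
  · by_contra hab
    obtain ⟨C, hC, haC, hbC⟩ := T.G.exists_isClosedOn_of_not_reachable hab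
    exact not_isClosedOn_of_minimal hsimple hS htc hmin v.2 haC
      ⟨(b : S).2, fun h => b.2 (Subtype.ext h)⟩ hbC hC
  · obtain ⟨u, hu, huv⟩ := Set.exists_ne_of_one_lt_ncard (s := S) (by omega) (v : V)
    exact ⟨⟨⟨u, hu⟩, fun h => huv (congrArg Subtype.val h)⟩⟩

/-- If `S` (with `|S| ≥ 3`) induces a temporally connected subgraph of a simple
undirected temporal graph under strict reachability, and is inclusion-minimal with this
property (no proper subset of size at least 3 induces a temporally connected subgraph), then
the induced underlying graph `G[S]` is 2-vertex-connected: it is connected, has at least 3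
vertices, and stays connected after removing any single vertex. -/
theorem minimal_closed_tcc_twoConnected {V : Type*} [Fintype V]
    (T : TemporalGraph V) (hsimple : T.Simple)
    (S : Set V) (h3 : 3 ≤ S.ncard)
    (htc : TemporallyConnectedOn T (· < ·) S)
    (hmin : ∀ S' : Set V, S' ⊆ S → S' ≠ S → 3 ≤ S'.ncard →
      ¬ TemporallyConnectedOn T (· < ·) S') :
    (T.G.induce S).Connected ∧ 3 ≤ S.ncard ∧
      ∀ v : S, ((T.G.induce S).induce {u : S | u ≠ v}).Connected :=
  minimal_closed_tcc_twoConnected_general T hsimple S h3 htc hmin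
end
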